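/- For every ε > 0 with K(w,ε) nonempty, the Chebyshev radius of the inflated set in L₂[0,1] satisfies R(K(w,ε)) ≤ h(x)^s + ε·√(m·h(x)). (Indeed, every f ∈ K(w,ε) satisfies ‖f − S_w‖_{L₂[0,1]} ≤ h(x)^s + ε√(m h(x)).) -/

import Mathlib

/-!
On each cell `[x_j, x_{j+1}]` write `f - S_w = (f - S_{λ_x f}) + S_{λ_x f - w}`.
The first term is a linear-interpolation error: it is bounded pointwise by `∫ |f'|` over the
cell, hence by Hölder by `E_j h^{1 - 1/p}` with `E_j = ‖f'‖_{L_p(cell)} ≤ 1`. As `p ≤ 2`,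
`E_j² ≤ E_j^p`, and `∑ E_j^p ≤ ‖f'‖_p^p ≤ 1`, so its squared `L₂` norm is at most
`h^{3 - 2/p}`. For the second term, the square of a linear interpolant is at most the linear
interpolant of the squares, so `‖S_v‖²_{L₂} ≤ h ∑ v_j² ≤ h m ε²`. Minkowski's inequality adds
the two bounds, and taking the centre `z = S_w` bounds the Chebyshev radius.
-/

open MeasureTheory Set ENNReal

/-- The model class: absolutely continuous `f : [0,1] → ℝ` with `‖f'‖_{L_p[0,1]} ≤ 1`. -/
def modelK (p : ℝ) : Set (ℝ → ℝ) :=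
  {f | ∃ f' : ℝ → ℝ, IntegrableOn f' (Icc 0 1) ∧
    (∀ t ∈ Icc (0 : ℝ) 1, f t = f 0 + ∫ u in (0 : ℝ)..t, f' u) ∧
    eLpNorm f' (ENNReal.ofReal p) (volume.restrict (Icc 0 1)) ≤ 1}

/-- Chebyshev radius in `L₂[0,1]`: `R(S) = inf_z sup_{f ∈ S} ‖f − z‖_{L₂[0,1]}`. -/
noncomputable def L2cheb (S : Set (ℝ → ℝ)) : ℝ≥0∞ :=
  ⨅ z : ℝ → ℝ, ⨆ f ∈ S, eLpNorm (fun t => f t - z t) 2 (volume.restrict (Icc 0 1))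

/-- Weighted euclidean norm on `ℝ^m` (here `m = n+1` data sites):
`‖v‖ = ( m⁻¹ ∑ v_j² )^{1/2}`. -/
noncomputable def wNorm {m : ℕ} (v : Fin m → ℝ) : ℝ :=
  Real.sqrt ((∑ j, v j ^ 2) / m)

lemma enorm_rpow_two (r : ℝ) : ‖r‖ₑ ^ (2 : ℝ) = ENNReal.ofReal (r ^ 2) := by
  rw [Real.enorm_eq_ofReal_abs, ENNReal.ofReal_rpow_of_nonneg (abs_nonneg r) zero_le_two,
    Real.rpow_two, sq_abs]

lemma eLpNorm_two_le_of_lintegral_le {α : Type*} [MeasurableSpace α] {μ : Measure α}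
    {g : α → ℝ} {A : ℝ≥0∞} (hg : ∫⁻ t, ‖g t‖ₑ ^ (2 : ℝ) ∂μ ≤ A) :
    eLpNorm g 2 μ ≤ A ^ (1 / 2 : ℝ) := by
  rw [eLpNorm_eq_lintegral_rpow_enorm_toReal two_ne_zero ofNat_ne_top, toReal_ofNat]
  exact ENNReal.rpow_le_rpow hg (by norm_num)

lemma eLpNorm_ofReal_rpow_eq_lintegral {α : Type*} [MeasurableSpace α] {μ : Measure α}
    {g : α → ℝ} {p : ℝ} (hp : 0 < p) :
    eLpNorm g (ENNReal.ofReal p) μ ^ p = ∫⁻ t, ‖g t‖ₑ ^ p ∂μ := by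
  have h := eLpNorm_nnreal_pow_eq_lintegral (f := g) (μ := μ) (Real.toNNReal_pos.2 hp).ne'
  rw [Real.coe_toNNReal _ hp.le] at h
  exact h

noncomputable def lineInterp (a b c d t : ℝ) : ℝ := c + (d - c) / (b - a) * (t - a)

section lineInterp

variable {a b : ℝ}

lemma lineInterp_sub (c d c' d' t : ℝ) :
    lineInterp a b c d t - lineInterp a b c' d' t = lineInterp a b (c - c') (d - d') t := by
  unfold lineInterp; ring

lemma exists_lineInterp_eq_convex_combination (hab : a < b) {t : ℝ} (ht : t ∈ Icc a b) :
    ∃ θ ∈ Icc (0 : ℝ) 1, ∀ c d, lineInterp a b c d t = (1 - θ) * c + θ * d := by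
  have : b - a ≠ 0 := sub_ne_zero.2 hab.ne'
  refine ⟨(t - a) / (b - a), ⟨div_nonneg (by linarith [ht.1]) (by linarith),
    (div_le_one (by linarith)).2 (by linarith [ht.2])⟩, fun c d => ?_⟩
  unfold lineInterp; field_simp; ring

lemma sq_lineInterp_le (hab : a < b) (c d : ℝ) {t : ℝ} (ht : t ∈ Icc a b) :
    lineInterp a b c d t ^ 2 ≤ lineInterp a b (c ^ 2) (d ^ 2) t := by
  obtain ⟨θ, ⟨hθ0, hθ1⟩, hθ⟩ := exists_lineInterp_eq_convex_combination hab ht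
  rw [hθ, hθ]
  nlinarith [sq_nonneg (c - d), mul_nonneg hθ0 (sub_nonneg.2 hθ1)]

lemma integral_lineInterp (a b c d : ℝ) :
    ∫ t in a..b, lineInterp a b c d t = (b - a) * (c + d) / 2 := by
  rcases eq_or_ne b a with rfl | hba
  · simp
  have hsub : b - a ≠ 0 := sub_ne_zero.2 hba
  simp only [lineInterp]
  rw [intervalIntegral.integral_add intervalIntegrable_const
    ((by fun_prop : Continuous fun t => (d - c) / (b - a) * (t - a)).intervalIntegrable _ _),
    intervalIntegral.integral_const, intervalIntegral.integral_const_mul,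
    intervalIntegral.integral_comp_sub_right (fun s => s), integral_id, smul_eq_mul]
  field_simp
  ring

lemma lintegral_sq_lineInterp_le (hab : a < b) (c d : ℝ) :
    ∫⁻ t in Ico a b, ‖lineInterp a b c d t‖ₑ ^ (2 : ℝ) ≤
      ENNReal.ofReal ((b - a) * (c ^ 2 + d ^ 2) / 2) := by
  have hnonneg : ∀ t ∈ Icc a b, 0 ≤ lineInterp a b (c ^ 2) (d ^ 2) t :=
    fun t ht => (sq_nonneg _).trans (sq_lineInterp_le hab c d ht)
  calc ∫⁻ t in Ico a b, ‖lineInterp a b c d t‖ₑ ^ (2 : ℝ)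
      ≤ ∫⁻ t in Icc a b, ENNReal.ofReal (lineInterp a b (c ^ 2) (d ^ 2) t) := by
        refine (lintegral_mono_set Ico_subset_Icc_self).trans
          (setLIntegral_mono (by unfold lineInterp; fun_prop) fun t ht => ?_)
        rw [enorm_rpow_two]
        exact ENNReal.ofReal_le_ofReal (sq_lineInterp_le hab c d ht)
    _ = ENNReal.ofReal (∫ t in a..b, lineInterp a b (c ^ 2) (d ^ 2) t) := by
        rw [intervalIntegral.integral_of_le hab.le, ← integral_Icc_eq_integral_Ioc,
          ofReal_integral_eq_lintegral_ofReal]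
        · exact (by unfold lineInterp; fun_prop : Continuous _).integrableOn_Icc
        · exact (ae_restrict_iff' measurableSet_Icc).2 (.of_forall hnonneg)
    _ = _ := by rw [integral_lineInterp]

end lineInterp

lemma ofReal_integral_abs_le_eLpNorm_mul {g : ℝ → ℝ} {a b p : ℝ} (hab : a ≤ b) (hp : 1 ≤ p)
    (hg : IntegrableOn g (Icc a b)) :
    ENNReal.ofReal (∫ u in a..b, |g u|) ≤
      eLpNorm g (ENNReal.ofReal p) (volume.restrict (Icc a b)) *
        ENNReal.ofReal (b - a) ^ (1 - 1 / p) := by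
  have hL1 : ENNReal.ofReal (∫ u in a..b, |g u|) = eLpNorm g 1 (volume.restrict (Icc a b)) := by
    rw [intervalIntegral.integral_of_le hab, ← integral_Icc_eq_integral_Ioc,
      eLpNorm_one_eq_lintegral_enorm, ← ofReal_integral_norm_eq_lintegral_enorm hg]
    rfl
  have hholder := eLpNorm_le_eLpNorm_mul_rpow_measure_univ (μ := volume.restrict (Icc a b))
    (p := 1) (q := ENNReal.ofReal p) (by simpa using hp) hg.aestronglyMeasurable
  rwa [Measure.restrict_apply_univ, Real.volume_Icc, ENNReal.toReal_ofReal (by linarith),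
    ENNReal.toReal_one, div_one, ← hL1] at hholder

/-- `f` is absolutely continuous on `[a, b]` with derivative `f'`, in the form used by
`modelK`. -/
structure IsIndefiniteIntegralOn (f f' : ℝ → ℝ) (a b : ℝ) : Prop where
  integrableOn : IntegrableOn f' (Icc a b)
  eq_add_integral : ∀ t ∈ Icc a b, f t = f a + ∫ u in a..t, f' u

namespace IsIndefiniteIntegralOn

variable {f f' : ℝ → ℝ} {a b : ℝ}

lemma intervalIntegrable (hf : IsIndefiniteIntegralOn f f' a b) {c d : ℝ} (hc : c ∈ Icc a b)
    (hd : d ∈ Icc a b) : IntervalIntegrable f' volume c d :=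
  (hf.integrableOn.mono_set (uIcc_subset_Icc hc hd)).intervalIntegrable

lemma sub_eq_integral (hf : IsIndefiniteIntegralOn f f' a b) {c d : ℝ} (hc : c ∈ Icc a b)
    (hd : d ∈ Icc a b) : f d - f c = ∫ u in c..d, f' u := by
  have ha : a ∈ Icc a b := ⟨le_rfl, hc.1.trans hc.2⟩
  rw [hf.eq_add_integral d hd, hf.eq_add_integral c hc, add_sub_add_left_eq_sub,
    intervalIntegral.integral_interval_sub_left (hf.intervalIntegrable ha hd)
      (hf.intervalIntegrable ha hc)]

lemma mono (hf : IsIndefiniteIntegralOn f f' a b) {c d : ℝ} (hac : a ≤ c) (hdb : d ≤ b) :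
    IsIndefiniteIntegralOn f f' c d := by
  refine ⟨hf.integrableOn.mono_set (Icc_subset_Icc hac hdb), fun t ht => ?_⟩
  have hsub : Icc c d ⊆ Icc a b := Icc_subset_Icc hac hdb
  rw [← hf.sub_eq_integral (hsub ⟨le_rfl, ht.1.trans ht.2⟩) (hsub ht)]
  ring

lemma continuousOn (hf : IsIndefiniteIntegralOn f f' a b) : ContinuousOn f (Icc a b) := by
  rcases lt_or_ge b a with hba | hab
  · simp [Icc_eq_empty_of_lt hba]
  have hprim := intervalIntegral.continuousOn_primitive_interval (μ := volume)
    (a := a) (b := b) (f := f') (by rw [uIcc_of_le hab]; exact hf.integrableOn)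
  rw [uIcc_of_le hab] at hprim
  exact (continuousOn_const.add hprim).congr hf.eq_add_integral

lemma abs_sub_le (hf : IsIndefiniteIntegralOn f f' a b) {c d : ℝ} (hc : c ∈ Icc a b)
    (hd : d ∈ Icc a b) : |f d - f c| ≤ ∫ u in a..b, |f' u| := by
  wlog hcd : c ≤ d generalizing c d
  · rw [abs_sub_comm]; exact this hd hc (le_of_not_ge hcd)
  rw [hf.sub_eq_integral hc hd]
  refine (intervalIntegral.abs_integral_le_integral_abs hcd).trans
    (intervalIntegral.integral_mono_interval hc.1 hcd hd.2 (.of_forall fun _ => abs_nonneg _) ?_)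
  exact (hf.intervalIntegrable ⟨le_rfl, hc.1.trans (hcd.trans hd.2)⟩
    ⟨hc.1.trans (hcd.trans hd.2), le_rfl⟩).abs

lemma abs_sub_lineInterp_le (hf : IsIndefiniteIntegralOn f f' a b) (hab : a < b) {t : ℝ}
    (ht : t ∈ Icc a b) :
    |f t - lineInterp a b (f a) (f b) t| ≤ ∫ u in a..b, |f' u| := by
  obtain ⟨θ, ⟨hθ0, hθ1⟩, hθ⟩ := exists_lineInterp_eq_convex_combination hab ht
  have ha : a ∈ Icc a b := ⟨le_rfl, hab.le⟩
  have hb : b ∈ Icc a b := ⟨hab.le, le_rfl⟩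
  calc |f t - lineInterp a b (f a) (f b) t|
      = |(1 - θ) * (f t - f a) + θ * (f t - f b)| := by rw [hθ]; ring_nf
    _ ≤ (1 - θ) * |f t - f a| + θ * |f t - f b| := by
        refine (abs_add_le _ _).trans_eq ?_
        rw [abs_mul, abs_mul, abs_of_nonneg (sub_nonneg.2 hθ1), abs_of_nonneg hθ0]
    _ ≤ (1 - θ) * (∫ u in a..b, |f' u|) + θ * ∫ u in a..b, |f' u| := by
        have := sub_nonneg.2 hθ1
        gcongr
        · exact hf.abs_sub_le ha ht
        · exact hf.abs_sub_le hb ht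
    _ = ∫ u in a..b, |f' u| := by ring

lemma lintegral_sq_sub_lineInterp_le {p : ℝ} (hf : IsIndefiniteIntegralOn f f' a b)
    (hab : a < b) (hp : 1 ≤ p) :
    ∫⁻ t in Ico a b, ‖f t - lineInterp a b (f a) (f b) t‖ₑ ^ (2 : ℝ) ≤
      eLpNorm f' (ENNReal.ofReal p) (volume.restrict (Icc a b)) ^ (2 : ℝ) *
        ENNReal.ofReal (b - a) ^ (3 - 2 / p) := by
  set E := eLpNorm f' (ENNReal.ofReal p) (volume.restrict (Icc a b))
  set δ := ENNReal.ofReal (b - a)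
  have hδ0 : δ ≠ 0 := by simpa [δ] using hab
  have hpoint : ∀ t ∈ Ico a b, ‖f t - lineInterp a b (f a) (f b) t‖ₑ ≤ E * δ ^ (1 - 1 / p) :=
    fun t ht => by
      rw [Real.enorm_eq_ofReal_abs]
      exact (ENNReal.ofReal_le_ofReal
        (hf.abs_sub_lineInterp_le hab (Ico_subset_Icc_self ht))).trans
          (ofReal_integral_abs_le_eLpNorm_mul hab.le hp hf.integrableOn)
  calc ∫⁻ t in Ico a b, ‖f t - lineInterp a b (f a) (f b) t‖ₑ ^ (2 : ℝ)
      ≤ ∫⁻ _ in Ico a b, (E * δ ^ (1 - 1 / p)) ^ (2 : ℝ) :=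
        setLIntegral_mono measurable_const fun t ht =>
          ENNReal.rpow_le_rpow (hpoint t ht) zero_le_two
    _ = (E * δ ^ (1 - 1 / p)) ^ (2 : ℝ) * δ := by rw [setLIntegral_const, Real.volume_Ico]
    _ = E ^ (2 : ℝ) * δ ^ (3 - 2 / p) := by
        rw [ENNReal.mul_rpow_of_nonneg _ _ zero_le_two, ← ENNReal.rpow_mul, mul_assoc,
          show 3 - 2 / p = (1 - 1 / p) * 2 + 1 by ring,
          ENNReal.rpow_add _ _ hδ0 ENNReal.ofReal_ne_top, ENNReal.rpow_one]

end IsIndefiniteIntegralOn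

section Partition

variable {n : ℕ} {x : Fin (n + 1) → ℝ}

lemma pairwise_disjoint_Ico_castSucc_succ (hx : Monotone x) :
    Pairwise (Function.onFun Disjoint fun j : Fin n => Ico (x j.castSucc) (x j.succ)) :=
  (pairwise_disjoint_on _).2 fun _ _ hij => Set.disjoint_left.2 fun _ hi hj =>
    (hi.2.trans_le (hx (Fin.succ_le_castSucc_iff.2 hij))).not_ge hj.1

lemma iUnion_Ico_castSucc_succ (hx : Monotone x) :
    ⋃ j : Fin n, Ico (x j.castSucc) (x j.succ) = Ico (x 0) (x (Fin.last n)) := by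
  refine subset_antisymm (iUnion_subset fun j =>
    Ico_subset_Ico (hx (Fin.zero_le _)) (hx (Fin.le_last _))) ?_
  intro t ht
  have hcover := Ico_subset_biUnion_Ico n fun k => x ⟨min k n, by omega⟩
  simp only [Nat.zero_min, min_self] at hcover
  obtain ⟨i, hi, hti⟩ := mem_iUnion₂.1 (hcover ht)
  have hi : i < n := Finset.mem_range.1 hi
  refine mem_iUnion.2 ⟨⟨i, hi⟩, ?_⟩
  convert hti using 3 <;> ext <;> simp [hi.le, Nat.succ_le_of_lt hi]

lemma lintegral_Icc_eq_sum_Ico (hx : Monotone x) (g : ℝ → ℝ≥0∞) :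
    ∫⁻ t in Icc (x 0) (x (Fin.last n)), g t =
      ∑ j : Fin n, ∫⁻ t in Ico (x j.castSucc) (x j.succ), g t := by
  rw [← setLIntegral_congr Ico_ae_eq_Icc, ← iUnion_Ico_castSucc_succ hx,
    lintegral_iUnion (fun _ => measurableSet_Ico) (pairwise_disjoint_Ico_castSucc_succ hx),
    tsum_fintype]

end Partition

/-- The interpolant `S_v`. The cells are half-open, so it vanishes at `x (Fin.last n)`; this is
invisible in `L₂`. -/
noncomputable def pwLinInterp {n : ℕ} (x v : Fin (n + 1) → ℝ) (t : ℝ) : ℝ :=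
  ∑ j : Fin n, (Ico (x j.castSucc) (x j.succ)).indicator
    (lineInterp (x j.castSucc) (x j.succ) (v j.castSucc) (v j.succ)) t

section pwLinInterp

variable {n : ℕ} {x : Fin (n + 1) → ℝ} {f f' : ℝ → ℝ} {p h : ℝ}

lemma pwLinInterp_eq_lineInterp (hx : Monotone x) (v : Fin (n + 1) → ℝ) {j : Fin n} {t : ℝ}
    (ht : t ∈ Ico (x j.castSucc) (x j.succ)) :
    pwLinInterp x v t = lineInterp (x j.castSucc) (x j.succ) (v j.castSucc) (v j.succ) t := by
  rw [pwLinInterp, Finset.sum_eq_single j, indicator_of_mem ht]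
  · exact fun i _ hij => indicator_of_notMem
      (Set.disjoint_right.1 (pairwise_disjoint_Ico_castSucc_succ hx hij) ht) _
  · simp

lemma measurable_pwLinInterp (x v : Fin (n + 1) → ℝ) : Measurable (pwLinInterp x v) :=
  Finset.measurable_sum _ fun _ _ =>
    (by unfold lineInterp; fun_prop : Measurable _).indicator measurableSet_Ico

lemma sum_sq_castSucc_add_sq_succ_le (v : Fin (n + 1) → ℝ) :
    ∑ j : Fin n, (v j.castSucc ^ 2 + v j.succ ^ 2) ≤ 2 * ∑ i, v i ^ 2 := by
  have hcast := Fin.sum_univ_castSucc fun i => v i ^ 2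
  have hsucc := Fin.sum_univ_succ fun i => v i ^ 2
  rw [Finset.sum_add_distrib]
  nlinarith [sq_nonneg (v 0), sq_nonneg (v (Fin.last n))]

lemma lintegral_sq_pwLinInterp_le (hx : StrictMono x) (hh0 : 0 ≤ h)
    (hh : ∀ j : Fin n, x j.succ - x j.castSucc ≤ h) (v : Fin (n + 1) → ℝ) :
    ∫⁻ t in Icc (x 0) (x (Fin.last n)), ‖pwLinInterp x v t‖ₑ ^ (2 : ℝ) ≤
      ENNReal.ofReal (h * ∑ i, v i ^ 2) := by
  rw [lintegral_Icc_eq_sum_Ico hx.monotone]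
  calc ∑ j : Fin n, ∫⁻ t in Ico (x j.castSucc) (x j.succ), ‖pwLinInterp x v t‖ₑ ^ (2 : ℝ)
      = ∑ j : Fin n, ∫⁻ t in Ico (x j.castSucc) (x j.succ),
          ‖lineInterp (x j.castSucc) (x j.succ) (v j.castSucc) (v j.succ) t‖ₑ ^ (2 : ℝ) :=
        Finset.sum_congr rfl fun j _ => setLIntegral_congr_fun measurableSet_Ico fun t ht => by
          rw [pwLinInterp_eq_lineInterp hx.monotone v ht]
    _ ≤ ∑ j : Fin n, ENNReal.ofReal (h / 2 * (v j.castSucc ^ 2 + v j.succ ^ 2)) :=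
        Finset.sum_le_sum fun j _ => by
          refine (lintegral_sq_lineInterp_le (hx Fin.castSucc_lt_succ) _ _).trans
            (ENNReal.ofReal_le_ofReal ?_)
          nlinarith [hh j, sq_nonneg (v j.castSucc), sq_nonneg (v j.succ)]
    _ = ENNReal.ofReal (h / 2 * ∑ j : Fin n, (v j.castSucc ^ 2 + v j.succ ^ 2)) := by
        rw [← ENNReal.ofReal_sum_of_nonneg (fun j _ => by positivity), Finset.mul_sum]
    _ ≤ ENNReal.ofReal (h * ∑ i, v i ^ 2) :=
        ENNReal.ofReal_le_ofReal (by nlinarith [sum_sq_castSucc_add_sq_succ_le v])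

lemma sum_eLpNorm_rpow_Icc_castSucc_succ_le (hx : Monotone x) (hp : 0 < p)
    (hf' : eLpNorm f' (ENNReal.ofReal p) (volume.restrict (Icc (x 0) (x (Fin.last n)))) ≤ 1) :
    ∑ j : Fin n,
      eLpNorm f' (ENNReal.ofReal p) (volume.restrict (Icc (x j.castSucc) (x j.succ))) ^ p ≤ 1 := by
  simp only [eLpNorm_ofReal_rpow_eq_lintegral hp, ← setLIntegral_congr Ico_ae_eq_Icc]
  rw [← lintegral_Icc_eq_sum_Ico hx, ← eLpNorm_ofReal_rpow_eq_lintegral hp]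
  exact ENNReal.rpow_le_one hf' hp.le

lemma lintegral_sq_sub_pwLinInterp_le (hx : StrictMono x) (hp1 : 1 ≤ p) (hp2 : p ≤ 2)
    (hh : ∀ j : Fin n, x j.succ - x j.castSucc ≤ h)
    (hf : IsIndefiniteIntegralOn f f' (x 0) (x (Fin.last n)))
    (hf' : eLpNorm f' (ENNReal.ofReal p) (volume.restrict (Icc (x 0) (x (Fin.last n)))) ≤ 1) :
    ∫⁻ t in Icc (x 0) (x (Fin.last n)), ‖f t - pwLinInterp x (f ∘ x) t‖ₑ ^ (2 : ℝ) ≤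
      ENNReal.ofReal h ^ (3 - 2 / p) := by
  have hp0 : 0 < p := by linarith
  have hexp : 0 ≤ 3 - 2 / p := by
    rw [sub_nonneg, div_le_iff₀ hp0]; linarith
  set E : Fin n → ℝ≥0∞ := fun j =>
    eLpNorm f' (ENNReal.ofReal p) (volume.restrict (Icc (x j.castSucc) (x j.succ)))
  have hcell : ∀ j : Fin n,
      ∫⁻ t in Ico (x j.castSucc) (x j.succ), ‖f t - pwLinInterp x (f ∘ x) t‖ₑ ^ (2 : ℝ) ≤
        E j ^ p * ENNReal.ofReal h ^ (3 - 2 / p) := by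
    intro j
    have hcell_lt : x j.castSucc < x j.succ := hx Fin.castSucc_lt_succ
    have hsub : Icc (x j.castSucc) (x j.succ) ⊆ Icc (x 0) (x (Fin.last n)) :=
      Icc_subset_Icc (hx.monotone (Fin.zero_le _)) (hx.monotone (Fin.le_last _))
    have hE : E j ≤ 1 := (eLpNorm_mono_measure _ (Measure.restrict_mono hsub le_rfl)).trans hf'
    calc ∫⁻ t in Ico (x j.castSucc) (x j.succ), ‖f t - pwLinInterp x (f ∘ x) t‖ₑ ^ (2 : ℝ)
        = ∫⁻ t in Ico (x j.castSucc) (x j.succ),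
            ‖f t - lineInterp (x j.castSucc) (x j.succ) (f (x j.castSucc)) (f (x j.succ)) t‖ₑ
              ^ (2 : ℝ) :=
          setLIntegral_congr_fun measurableSet_Ico fun t ht => by
            rw [pwLinInterp_eq_lineInterp hx.monotone _ ht, Function.comp_apply,
              Function.comp_apply]
      _ ≤ E j ^ (2 : ℝ) * ENNReal.ofReal (x j.succ - x j.castSucc) ^ (3 - 2 / p) :=
          (hf.mono (hsub ⟨le_rfl, hcell_lt.le⟩).1
            (hsub ⟨hcell_lt.le, le_rfl⟩).2).lintegral_sq_sub_lineInterp_le hcell_lt hp1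
      _ ≤ E j ^ p * ENNReal.ofReal h ^ (3 - 2 / p) :=
          mul_le_mul' (ENNReal.rpow_le_rpow_of_exponent_ge hE hp2)
            (ENNReal.rpow_le_rpow (ENNReal.ofReal_le_ofReal (hh j)) hexp)
  calc ∫⁻ t in Icc (x 0) (x (Fin.last n)), ‖f t - pwLinInterp x (f ∘ x) t‖ₑ ^ (2 : ℝ)
      ≤ ∑ j : Fin n, E j ^ p * ENNReal.ofReal h ^ (3 - 2 / p) := by
        rw [lintegral_Icc_eq_sum_Ico hx.monotone]
        exact Finset.sum_le_sum fun j _ => hcell j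
    _ ≤ ENNReal.ofReal h ^ (3 - 2 / p) := by
        rw [← Finset.sum_mul]
        exact mul_le_of_le_one_left bot_le
          (sum_eLpNorm_rpow_Icc_castSucc_succ_le hx.monotone hp0 hf')

theorem eLpNorm_sub_le_of_eqOn_lineInterp (hx : StrictMono x) (hp1 : 1 ≤ p) (hp2 : p ≤ 2)
    (hh0 : 0 ≤ h)    (hh : ∀ j : Fin n, x j.succ - x j.castSucc ≤ h)
    (hf : IsIndefiniteIntegralOn f f' (x 0) (x (Fin.last n)))
    (hf' : eLpNorm f' (ENNReal.ofReal p) (volume.restrict (Icc (x 0) (x (Fin.last n)))) ≤ 1)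
    (w : Fin (n + 1) → ℝ) (S : ℝ → ℝ)
    (hS : ∀ j : Fin n, EqOn S (lineInterp (x j.castSucc) (x j.succ) (w j.castSucc) (w j.succ))
      (Ico (x j.castSucc) (x j.succ))) :
    eLpNorm (fun t => f t - S t) 2 (volume.restrict (Icc (x 0) (x (Fin.last n)))) ≤
      ENNReal.ofReal (h ^ (3 / 2 - 1 / p)) +
        ENNReal.ofReal √(h * ∑ i, (f (x i) - w i) ^ 2) := by
  set v : Fin (n + 1) → ℝ := fun i => f (x i) - w i
  have hsplit : (fun t => f t - S t) =ᵐ[volume.restrict (Icc (x 0) (x (Fin.last n)))]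
      (fun t => f t - pwLinInterp x (f ∘ x) t) + pwLinInterp x v := by
    rw [Filter.EventuallyEq, ← Measure.restrict_congr_set Ico_ae_eq_Icc,
      ae_restrict_iff' measurableSet_Ico]
    refine .of_forall fun t ht => ?_
    rw [← iUnion_Ico_castSucc_succ hx.monotone] at ht
    obtain ⟨j, hj⟩ := mem_iUnion.1 ht
    simp only [Pi.add_apply, hS j hj, pwLinInterp_eq_lineInterp hx.monotone _ hj, v,
      Function.comp_apply, ← lineInterp_sub]
    ring
  set μ := volume.restrict (Icc (x 0) (x (Fin.last n)))
  have hfm : AEStronglyMeasurable f μ := hf.continuousOn.aestronglyMeasurable measurableSet_Icc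
  have hexp : 0 ≤ 3 - 2 / p := by
    rw [sub_nonneg, div_le_iff₀ (by linarith)]; linarith
  calc eLpNorm (fun t => f t - S t) 2 μ
      ≤ eLpNorm (fun t => f t - pwLinInterp x (f ∘ x) t) 2 μ + eLpNorm (pwLinInterp x v) 2 μ := by
        rw [eLpNorm_congr_ae hsplit]
        exact eLpNorm_add_le (hfm.sub (measurable_pwLinInterp x _).aestronglyMeasurable)
          (measurable_pwLinInterp x v).aestronglyMeasurable one_le_two
    _ ≤ (ENNReal.ofReal h ^ (3 - 2 / p)) ^ (1 / 2 : ℝ) +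
          ENNReal.ofReal (h * ∑ i, v i ^ 2) ^ (1 / 2 : ℝ) :=
        add_le_add
          (eLpNorm_two_le_of_lintegral_le (lintegral_sq_sub_pwLinInterp_le hx hp1 hp2 hh hf hf'))
          (eLpNorm_two_le_of_lintegral_le (lintegral_sq_pwLinInterp_le hx hh0 hh v))
    _ = _ := by
        rw [← ENNReal.rpow_mul, ENNReal.ofReal_rpow_of_nonneg hh0 (mul_nonneg hexp one_half_pos.le),
          ENNReal.ofReal_rpow_of_nonneg (by positivity) (by norm_num), ← Real.sqrt_eq_rpow]
        congr 3
        ring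

end pwLinInterp

lemma sqrt_mul_sum_sq_le_of_wNorm_le {m : ℕ} {v : Fin m → ℝ} {ε h : ℝ} (hh : 0 ≤ h)
    (hv : wNorm v ≤ ε) : √(h * ∑ j, v j ^ 2) ≤ ε * √(m * h) := by
  have hε : 0 ≤ ε := (Real.sqrt_nonneg _).trans hv
  have hsum : ∑ j, v j ^ 2 ≤ m * ε ^ 2 := by
    rcases Nat.eq_zero_or_pos m with rfl | hm
    · simp
    have := (div_le_iff₀ (by exact_mod_cast hm)).1 ((Real.sqrt_le_left hε).1 hv)
    linarith
  calc √(h * ∑ j, v j ^ 2) ≤ √((ε ^ 2) * (m * h)) :=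
        Real.sqrt_le_sqrt (by nlinarith)
    _ = ε * √(m * h) := by rw [Real.sqrt_mul (sq_nonneg ε), Real.sqrt_sq hε]

theorem stmt_18_general
    (p : ℝ) (hp1 : 1 < p) (hp2 : p ≤ 2)
    {n : ℕ} (x : Fin (n + 1) → ℝ)
    (hmono : StrictMono x) (hx0 : x 0 = 0) (hx1 : x (Fin.last n) = 1)
    (hX : ℝ)
    (hhX : IsGreatest (Set.range fun j : Fin n => x j.succ - x j.castSucc) hX)
    (w : Fin (n + 1) → ℝ)
    (Sw : ℝ → ℝ)
    (hSw : ∀ j : Fin n, ∀ t ∈ Icc (x j.castSucc) (x j.succ),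
      Sw t = w j.castSucc +
        (w j.succ - w j.castSucc) / (x j.succ - x j.castSucc) * (t - x j.castSucc)) :
    ∀ ε : ℝ, 0 < ε →
      ({f ∈ modelK p | wNorm (fun j => f (x j) - w j) ≤ ε}).Nonempty →
      (∀ f ∈ {f ∈ modelK p | wNorm (fun j => f (x j) - w j) ≤ ε},
        eLpNorm (fun t => f t - Sw t) 2 (volume.restrict (Icc 0 1)) ≤
          ENNReal.ofReal (hX ^ (3 / 2 - 1 / p) +
            ε * Real.sqrt (((n : ℝ) + 1) * hX))) ∧
      L2cheb {f ∈ modelK p | wNorm (fun j => f (x j) - w j) ≤ ε} ≤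
        ENNReal.ofReal (hX ^ (3 / 2 - 1 / p) +
          ε * Real.sqrt (((n : ℝ) + 1) * hX)) := by
  intro ε _ _
  have hcell : ∀ j : Fin n, x j.succ - x j.castSucc ≤ hX := fun j => hhX.2 ⟨j, rfl⟩
  have hX0 : 0 ≤ hX := by
    obtain ⟨j, hj⟩ := hhX.1
    exact hj ▸ (sub_pos.2 (hmono Fin.castSucc_lt_succ)).le
  have hbound : ∀ f ∈ {f ∈ modelK p | wNorm (fun j => f (x j) - w j) ≤ ε},
      eLpNorm (fun t => f t - Sw t) 2 (volume.restrict (Icc 0 1)) ≤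
        ENNReal.ofReal (hX ^ (3 / 2 - 1 / p) + ε * Real.sqrt (((n : ℝ) + 1) * hX)) := by
    rintro f ⟨⟨f', hf'int, hf, hf'⟩, hfw⟩
    have hI : Icc (0 : ℝ) 1 = Icc (x 0) (x (Fin.last n)) := by rw [hx0, hx1]
    rw [hI] at hf'int hf hf' ⊢
    rw [← hx0] at hf
    refine (eLpNorm_sub_le_of_eqOn_lineInterp hmono hp1.le hp2 hX0 hcell ⟨hf'int, hf⟩ hf' w Sw
      fun j t ht => hSw j t (Ico_subset_Icc_self ht)).trans ?_
    rw [ENNReal.ofReal_add (by positivity) (by positivity)]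
    gcongr
    exact_mod_cast sqrt_mul_sum_sq_le_of_wNorm_le hX0 hfw
  exact ⟨hbound, iInf_le_of_le Sw (iSup₂_le hbound)⟩

/-- Bound for the Chebyshev radius of the inflated set: for every `ε > 0` with
`K(w,ε) ≠ ∅`, every `f ∈ K(w,ε)` satisfies
`‖f − S_w‖_{L₂[0,1]} ≤ h(x)^s + ε √(m h(x))`, and consequently
`R(K(w,ε)) ≤ h(x)^s + ε √(m h(x))`, where `m = n+1` is the number of data sites
and `s := 3/2 − 1/p`. -/
theorem stmt_18
    (p : ℝ) (hp1 : 1 < p) (hp2 : p ≤ 2)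
    {n : ℕ} (hn : 0 < n) (x : Fin (n + 1) → ℝ)
    (hmono : StrictMono x) (hx0 : x 0 = 0) (hx1 : x (Fin.last n) = 1)
    (hX : ℝ)
    (hhX : IsGreatest (Set.range fun j : Fin n => x j.succ - x j.castSucc) hX)
    (w : Fin (n + 1) → ℝ)
    (Sw : ℝ → ℝ)
    (hSw : ∀ j : Fin n, ∀ t ∈ Icc (x j.castSucc) (x j.succ),
      Sw t = w j.castSucc +
        (w j.succ - w j.castSucc) / (x j.succ - x j.castSucc) * (t - x j.castSucc)) :
    ∀ ε : ℝ, 0 < ε →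
      ({f ∈ modelK p | wNorm (fun j => f (x j) - w j) ≤ ε}).Nonempty →
      (∀ f ∈ {f ∈ modelK p | wNorm (fun j => f (x j) - w j) ≤ ε},
        eLpNorm (fun t => f t - Sw t) 2 (volume.restrict (Icc 0 1)) ≤
          ENNReal.ofReal (hX ^ (3 / 2 - 1 / p) +
            ε * Real.sqrt (((n : ℝ) + 1) * hX))) ∧
      L2cheb {f ∈ modelK p | wNorm (fun j => f (x j) - w j) ≤ ε} ≤
        ENNReal.ofReal (hX ^ (3 / 2 - 1 / p) +
          ε * Real.sqrt (((n : ℝ) + 1) * hX)) :=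
  stmt_18_general p hp1 hp2 x hmono hx0 hx1 hX hhX w Sw hSw
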